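/- arXiv:2602.08760 — 2 statements merged into one kernel-verified Lean document; each statement's English description precedes it below -/
import Mathlib

section
/- Let H, C₁, C₂ be matrices in SL(2, ℂ) with HC₁ = C₁H and HC₂ = C₂H. Set C₃ = C₁C₂, u = tr(H), xᵢ = tr(Cᵢ) and yᵢ = tr(HCᵢ) for i = 1, 2, 3. Then 2x₃ = u·y₃ + x₁x₂ − y₁y₂. -/
/-- The group `SL(2, ℂ)`. -/
abbrev SL2C := Matrix.SpecialLinearGroup (Fin 2) ℂ

/-- The trace of an element of `SL(2, ℂ)`. -/
noncomputable def trSL (A : SL2C) : ℂ := Matrix.trace (A : Matrix (Fin 2) (Fin 2) ℂ)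

lemma fricke (A B : SL2C) : trSL (A * B) + trSL (A * B⁻¹) = trSL A * trSL B := by
  simp only [trSL, Matrix.SpecialLinearGroup.coe_mul, Matrix.SpecialLinearGroup.coe_inv,
    Matrix.adjugate_fin_two]
  simp [Matrix.trace_fin_two, Matrix.mul_apply, Fin.sum_univ_two]
  ring

lemma tr_inv (A : SL2C) : trSL A⁻¹ = trSL A := by
  simp only [trSL, Matrix.SpecialLinearGroup.coe_inv, Matrix.adjugate_fin_two]
  simp [Matrix.trace_fin_two]
  ring

lemma tr_conj (g x : SL2C) : trSL (g * x * g⁻¹) = trSL x := by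
  simp only [trSL, Matrix.SpecialLinearGroup.coe_mul]
  rw [Matrix.trace_mul_comm]
  rw [← Matrix.mul_assoc, ← Matrix.SpecialLinearGroup.coe_mul, ← Matrix.SpecialLinearGroup.coe_mul]
  simp

theorem commuting_trace_rel4 (H C1 C2 C3 : SL2C) (hC3 : C3 = C1 * C2)
    (h1 : H * C1 = C1 * H) (h2 : H * C2 = C2 * H)
    (u x1 x2 x3 y1 y2 y3 : ℂ)
    (hu : u = trSL H) (hx1 : x1 = trSL C1) (hx2 : x2 = trSL C2) (hx3 : x3 = trSL C3)
    (hy1 : y1 = trSL (H * C1)) (hy2 : y2 = trSL (H * C2)) (hy3 : y3 = trSL (H * C3)) :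
    2 * x3 = u * y3 + x1 * x2 - y1 * y2 := by
  have f1 := fricke (H * C1) (H * C2)
  have f2 := fricke H (H * C3)
  have f3 := fricke C1 C2
  have e1 : (H * C1) * (H * C2) = H * (H * C3) := by
    rw [hC3, show H * C1 * (H * C2) = H * (C1 * H) * C2 by group, ← h1]; group
  have e2 : (H * C1) * (H * C2)⁻¹ = H * (C1 * C2⁻¹) * H⁻¹ := by group
  have e3 : H * (H * C3)⁻¹ = H * C3⁻¹ * H⁻¹ := by group
  rw [e1, e2, tr_conj] at f1
  rw [e3] at f2
  have e4 : H * C3⁻¹ * H⁻¹ = H * C3⁻¹ * H⁻¹ := rfl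
  rw [show H * C3⁻¹ * H⁻¹ = H * (C3⁻¹) * H⁻¹ from rfl, tr_conj, tr_inv] at f2
  rw [← hC3] at f3
  rw [hy1, hy2, hu, hy3, hx1, hx2, hx3]
  linear_combination f2 + f3 - f1
end

section
/- Let H and C be matrices in SL(2, ℂ), let p, q ≥ 1 be integers with Cᵖ = H^q, and put u = tr(H), x = tr(C), y = tr(HC). Then S_q(u)·y − S_{q−1}(u)·x = T_{p+1}(x) and S_{q+1}(u)·y − S_q(u)·x = S_{p+1}(x)·y − S_p(x)·u. -/
open Polynomial

/-- Chebyshev-type polynomials of the first kind: `T 0 = 2`, `T 1 = X`,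
`T (n+2) = X * T (n+1) - T n`, for natural indices. -/
noncomputable def chebT : ℕ → Polynomial ℤ
  | 0 => 2
  | 1 => X
  | n + 2 => X * chebT (n + 1) - chebT n

/-- Chebyshev-type polynomials of the second kind: `S 0 = 0`, `S 1 = 1`,
`S (n+2) = X * S (n+1) - S n`, for natural indices. -/
noncomputable def chebS : ℕ → Polynomial ℤ
  | 0 => 0
  | 1 => 1
  | n + 2 => X * chebS (n + 1) - chebS n

/-- `T n` for `n : ℤ`, extended by `T (-n) = T n`. -/
noncomputable def Tz (n : ℤ) : Polynomial ℤ := chebT n.natAbs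

/-- `S n` for `n : ℤ`, extended by `S (-n) = - S n`. -/
noncomputable def Sz (n : ℤ) : Polynomial ℤ :=
  if 0 ≤ n then chebS n.natAbs else -chebS n.natAbs

lemma chebT_rec (n : ℕ) : chebT (n+2) = X * chebT (n+1) - chebT n := by rw [chebT]

lemma chebS_rec (n : ℕ) : chebS (n+2) = X * chebS (n+1) - chebS n := by rw [chebS]

lemma chebT_eq : ∀ n, chebT (n+1) = X * chebS (n+1) - 2 * chebS n
  | 0 => by simp [chebT, chebS]
  | 1 => by simp [chebT, chebS]
  | n + 2 => by
    have h1 := chebT_eq (n+1)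
    have h2 := chebT_eq n
    show chebT (n+1+2) = X * chebS (n+1+2) - 2 * chebS (n+2)
    rw [chebT_rec, chebS_rec]
    simp only [show n+1+1 = n+2 from rfl] at h1 ⊢
    linear_combination X * h1 - h2 + 2 * chebS_rec n

lemma sl2_sq (A : SL2C) :
    (A : Matrix (Fin 2) (Fin 2) ℂ) * A = trSL A • (A : Matrix (Fin 2) (Fin 2) ℂ) - 1 := by
  have hdet : Matrix.det (A : Matrix (Fin 2) (Fin 2) ℂ) = 1 := A.2
  rw [Matrix.det_fin_two] at hdet
  ext i j
  fin_cases i <;> fin_cases j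
  all_goals simp [Matrix.mul_apply, Fin.sum_univ_two, trSL, Matrix.trace_fin_two,
    Matrix.one_apply, Fin.mk_zero, Fin.mk_one]
  any_goals ring
  all_goals linear_combination -hdet

lemma sl2_pow (A : SL2C) (n : ℕ) :
    ((A ^ (n + 1) : SL2C) : Matrix (Fin 2) (Fin 2) ℂ) =
      aeval (trSL A) (chebS (n + 1)) • (A : Matrix (Fin 2) (Fin 2) ℂ) -
        aeval (trSL A) (chebS n) • 1 := by
  induction n with
  | zero => simp [chebS]
  | succ n ih =>
    have h2 := sl2_sq A
    rw [pow_succ, Matrix.SpecialLinearGroup.coe_mul, ih, chebS_rec]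
    rw [sub_mul, smul_mul_assoc, smul_mul_assoc, one_mul, h2]
    simp only [map_sub, map_mul, aeval_X, smul_sub, smul_smul]
    module

lemma trace_helper (a b : ℂ) (M N : Matrix (Fin 2) (Fin 2) ℂ) :
    Matrix.trace ((a • M - b • 1) * N) = a * Matrix.trace (M * N) - b * Matrix.trace N := by
  rw [sub_mul, smul_mul_assoc, smul_mul_assoc, one_mul, Matrix.trace_sub,
    Matrix.trace_smul, Matrix.trace_smul, smul_eq_mul, smul_eq_mul]

theorem seifert_rel_9_8 (H C : SL2C) (p q : ℤ) (hp : 1 ≤ p) (hq : 1 ≤ q)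
    (hrel : C ^ p = H ^ q)
    (u x y : ℂ) (hu : u = trSL H) (hx : x = trSL C) (hy : y = trSL (H * C)) :
    aeval u (Sz q) * y - aeval u (Sz (q - 1)) * x = aeval x (Tz (p + 1)) ∧
      aeval u (Sz (q + 1)) * y - aeval u (Sz q) * x =
        aeval x (Sz (p + 1)) * y - aeval x (Sz p) * u := by
  obtain ⟨m, rfl⟩ : ∃ m : ℕ, p = (m : ℤ) + 1 := ⟨(p - 1).toNat, by omega⟩
  obtain ⟨n, rfl⟩ : ∃ n : ℕ, q = (n : ℤ) + 1 := ⟨(q - 1).toNat, by omega⟩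
  have hSz : ∀ k : ℕ, Sz (k : ℤ) = chebS k := by
    intro k; simp [Sz]
  have e1 : ((n : ℤ) + 1 : ℤ) = ((n + 1 : ℕ) : ℤ) := by push_cast; ring
  have e2 : (((n + 1 : ℕ) : ℤ) - 1 : ℤ) = ((n : ℕ) : ℤ) := by push_cast; ring
  have e3 : (((n + 1 : ℕ) : ℤ) + 1 : ℤ) = ((n + 2 : ℕ) : ℤ) := by push_cast; ring
  have f1 : ((m : ℤ) + 1 : ℤ) = ((m + 1 : ℕ) : ℤ) := by push_cast; ring
  have f3 : (((m + 1 : ℕ) : ℤ) + 1 : ℤ) = ((m + 2 : ℕ) : ℤ) := by push_cast; ring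
  rw [e1, f1, e2, e3, f3, hSz, hSz, hSz, hSz, hSz]
  have hTz : Tz ((m + 2 : ℕ) : ℤ) = chebT (m + 2) := by unfold Tz; congr 1
  rw [hTz]
  -- matrix relation
  rw [f1, e1, zpow_natCast, zpow_natCast] at hrel
  have hMrel : ((C : Matrix (Fin 2) (Fin 2) ℂ)) ^ (m + 1) =
      ((H : Matrix (Fin 2) (Fin 2) ℂ)) ^ (n + 1) := by
    rw [← Matrix.SpecialLinearGroup.coe_pow, ← Matrix.SpecialLinearGroup.coe_pow, hrel]
  set MH := (H : Matrix (Fin 2) (Fin 2) ℂ) with hMH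
  set MC := (C : Matrix (Fin 2) (Fin 2) ℂ) with hMC
  have hxy : Matrix.trace (MH * MC) = y := by
    rw [hy, trSL, Matrix.SpecialLinearGroup.coe_mul]
  have hxx : Matrix.trace MC = x := hx.symm
  have hux : Matrix.trace MH = u := hu.symm
  have hpowH : ∀ k : ℕ, MH ^ (k + 1) =
      aeval u (chebS (k + 1)) • MH - aeval u (chebS k) • 1 := by
    intro k
    rw [← Matrix.SpecialLinearGroup.coe_pow, sl2_pow, hu]
  have hpowC : ∀ k : ℕ, MC ^ (k + 1) =
      aeval x (chebS (k + 1)) • MC - aeval x (chebS k) • 1 := by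
    intro k
    rw [← Matrix.SpecialLinearGroup.coe_pow, sl2_pow, hx]
  -- first identity
  have t1 : Matrix.trace (MH ^ (n + 1) * MC) =
      aeval u (chebS (n + 1)) * y - aeval u (chebS n) * x := by
    rw [hpowH, trace_helper, hxy, hxx]
  have t2 : Matrix.trace (MC ^ (m + 1) * MC) =
      aeval x (chebS (m + 2)) * x - 2 * aeval x (chebS (m + 1)) := by
    rw [← pow_succ, hpowC (m + 1), Matrix.trace_sub, Matrix.trace_smul, Matrix.trace_smul,
      Matrix.trace_one, hxx]
    simp [smul_eq_mul]
    ring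
  have first : aeval u (chebS (n + 1)) * y - aeval u (chebS n) * x = aeval x (chebT (m + 2)) := by
    rw [← t1, ← hMrel, t2, chebT_eq]
    simp only [map_sub, map_mul, aeval_X, map_ofNat]
    ring
  refine ⟨first, ?_⟩
  -- second identity
  have s1 : Matrix.trace (MH ^ (n + 2) * MC) =
      aeval u (chebS (n + 2)) * y - aeval u (chebS (n + 1)) * x := by
    rw [hpowH (n + 1), trace_helper, hxy, hxx]
  have s2 : Matrix.trace (MH * MC ^ (m + 2)) =
      aeval x (chebS (m + 2)) * y - aeval x (chebS (m + 1)) * u := by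
    rw [hpowC (m + 1), mul_sub, mul_smul_comm, mul_smul_comm, mul_one, Matrix.trace_sub,
      Matrix.trace_smul, Matrix.trace_smul, hxy, hux, smul_eq_mul, smul_eq_mul]
  have key : MH ^ (n + 2) * MC = MH * MC ^ (m + 2) := by
    rw [show n + 2 = 1 + (n + 1) from by ring, pow_add, pow_one, mul_assoc, ← hMrel,
      ← pow_succ]
  rw [← s1, key, s2]
end
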